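/- arXiv:1806.03347 — 2 statements merged into one kernel-verified Lean document; each statement's English description precedes it below -/
import Mathlib

section
/- Let x* ∈ Ω be a point with ∇φ(x*) = 0, where φ is the penalty-barrier function with parameters ρ, ω, τ_E > 0. Define λ* = -(1/ω)·c(x*), μ_L* = τ_E/(x* - x_L) (componentwise), μ_R* = τ_E/(x_R - x*) (componentwise). Then z* = (x*, λ*, μ_L*, μ_R*) satisfies F(z*, p) = 0 with p = (τ_E, 0) and ω̃-term absorbed appropriately; conversely if F(z, (τ_E, λ̂)) = 0 with λ = 0, then ∇φ(x) = 0. -/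
/-!
On the open box `xL < x < xR` the penalty-barrier function is differentiable, and (since `S` is
symmetric) its partial derivatives are
`∂ᵢf + ρ (S x)ᵢ + (1/ω) ∑ⱼ cⱼ ∂ᵢcⱼ - τ / (xᵢ - xLᵢ) + τ / (xRᵢ - xᵢ)`.
The last three blocks of `F = 0` with `λ = 0` force `λ̂ = -c/ω`, `μ_L = τ/(x - xL)` and
`μ_R = τ/(xR - x)`, and with these values the first block of `F` is exactly the vector of these
partial derivatives, which vanishes iff `∇φ(x) = 0`.
-/

open Matrix

theorem ContinuousLinearMap.eq_zero_iff_apply_single_one {ι R M : Type*} [Finite ι]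
    [DecidableEq ι] [Semiring R] [TopologicalSpace R] [AddCommMonoid M] [Module R M]
    [TopologicalSpace M]
    (L : (ι → R) →L[R] M) :
    L = 0 ↔ ∀ i, L (Pi.single i 1) = 0 := by
  refine ⟨fun h i => by simp [h], fun h => ContinuousLinearMap.coe_injective ?_⟩
  refine (Pi.basisFun R ι).ext fun i => ?_
  simpa using h i

section

variable {ι : Type*} [Fintype ι]

theorem hasFDerivAt_dotProduct_mulVec_self (S : Matrix ι ι ℝ) (x : ι → ℝ) :
    HasFDerivAt (fun y => y ⬝ᵥ S *ᵥ y)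
      (∑ k, (x k • (ContinuousLinearMap.proj k).comp
          (LinearMap.toContinuousLinearMap S.mulVecLin)
        + (S *ᵥ x) k • ContinuousLinearMap.proj k)) x :=
  HasFDerivAt.fun_sum fun k _ => (hasFDerivAt_apply k x).mul
    ((ContinuousLinearMap.proj k).comp (LinearMap.toContinuousLinearMap S.mulVecLin)).hasFDerivAt

theorem fderiv_dotProduct_mulVec_self_apply (S : Matrix ι ι ℝ) (x v : ι → ℝ) :
    fderiv ℝ (fun y => y ⬝ᵥ S *ᵥ y) x v = x ⬝ᵥ S *ᵥ v + S *ᵥ x ⬝ᵥ v := by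
  rw [(hasFDerivAt_dotProduct_mulVec_self S x).fderiv]
  simp [dotProduct, Finset.sum_add_distrib]

theorem fderiv_dotProduct_mulVec_self_apply_single [DecidableEq ι] {S : Matrix ι ι ℝ}
    (hS : S.IsSymm) (x : ι → ℝ) (i : ι) :
    fderiv ℝ (fun y => y ⬝ᵥ S *ᵥ y) x (Pi.single i 1) = 2 * (S *ᵥ x) i := by
  have hcol : S.col i = S i := funext fun k => hS.apply i k
  rw [fderiv_dotProduct_mulVec_self_apply, mulVec_single_one, hcol, dotProduct_single_one,
    dotProduct_comm, two_mul]
  rfl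

theorem hasFDerivAt_sum_sq {E κ : Type*} [NormedAddCommGroup E] [NormedSpace ℝ E] [Fintype κ]
    {g : E → κ → ℝ} {x : E} (hg : ∀ j, DifferentiableAt ℝ (fun y => g y j) x) :
    HasFDerivAt (fun y => ∑ j, g y j ^ 2)
      (∑ j, (2 * g x j) • fderiv ℝ (fun y => g y j) x) x :=
  HasFDerivAt.fun_sum fun j _ => by simpa using ((hg j).hasFDerivAt.pow 2)

theorem hasFDerivAt_logBarrier {a b x : ι → ℝ} (hx : ∀ i, a i < x i ∧ x i < b i) :
    HasFDerivAt (fun y => ∑ i, (Real.log (y i - a i) + Real.log (b i - y i)))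
      (∑ i, ((x i - a i)⁻¹ - (b i - x i)⁻¹) •
        (ContinuousLinearMap.proj i : (ι → ℝ) →L[ℝ] ℝ)) x := by
  refine HasFDerivAt.fun_sum fun i _ => ?_
  have hl := ((hasFDerivAt_apply (𝕜 := ℝ) i x).sub_const (a i)).log (sub_pos.2 (hx i).1).ne'
  have hr := ((hasFDerivAt_apply (𝕜 := ℝ) i x).const_sub (b i)).log (sub_pos.2 (hx i).2).ne'
  refine (hl.add hr).congr_fderiv ?_
  ext v
  simp
  ring

variable {κ : Type*} [Fintype κ]

noncomputable def penaltyBarrier (f : (ι → ℝ) → ℝ) (c : (ι → ℝ) → κ → ℝ)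
    (S : Matrix ι ι ℝ) (ρ ω τ : ℝ) (xL xR : ι → ℝ) (x : ι → ℝ) : ℝ :=
  f x + ρ / 2 * (x ⬝ᵥ S *ᵥ x) + 1 / (2 * ω) * ∑ j, (c x j) ^ 2
    - τ * ∑ i, (Real.log (x i - xL i) + Real.log (xR i - x i))

theorem fderiv_penaltyBarrier_apply_single [DecidableEq ι] {f : (ι → ℝ) → ℝ}
    {c : (ι → ℝ) → κ → ℝ} {S : Matrix ι ι ℝ} {xL xR x : ι → ℝ}
    (hf : DifferentiableAt ℝ f x) (hc : ∀ j, DifferentiableAt ℝ (fun y => c y j) x)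
    (hS : S.IsSymm) (hx : ∀ i, xL i < x i ∧ x i < xR i) (ρ ω τ : ℝ) (i : ι) :
    fderiv ℝ (penaltyBarrier f c S ρ ω τ xL xR) x (Pi.single i 1)
      = fderiv ℝ f x (Pi.single i 1) + ρ * (S *ᵥ x) i
        + 1 / ω * ∑ j, c x j * fderiv ℝ (fun y => c y j) x (Pi.single i 1)
        - τ / (x i - xL i) + τ / (xR i - x i) := by
  have hquad := (hasFDerivAt_dotProduct_mulVec_self S x).differentiableAt.hasFDerivAt
  have hφ : HasFDerivAt (penaltyBarrier f c S ρ ω τ xL xR) _ x :=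
    ((hf.hasFDerivAt.add (hquad.const_mul (ρ / 2))).add
      ((hasFDerivAt_sum_sq hc).const_mul (1 / (2 * ω)))).sub
      ((hasFDerivAt_logBarrier hx).const_mul τ)
  rw [hφ.fderiv]
  simp [fderiv_dotProduct_mulVec_self_apply_single hS, Pi.single_apply, mul_assoc,
    ← Finset.mul_sum]
  ring

theorem fderiv_penaltyBarrier_eq_zero_iff [DecidableEq ι] {f : (ι → ℝ) → ℝ}
    {c : (ι → ℝ) → κ → ℝ} {S : Matrix ι ι ℝ} {xL xR x : ι → ℝ}
    (hf : DifferentiableAt ℝ f x) (hc : ∀ j, DifferentiableAt ℝ (fun y => c y j) x)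
    (hS : S.IsSymm) (hx : ∀ i, xL i < x i ∧ x i < xR i) (ρ ω τ : ℝ) :
    fderiv ℝ (penaltyBarrier f c S ρ ω τ xL xR) x = 0 ↔
      ∀ i, fderiv ℝ f x (Pi.single i 1) + ρ * (S *ᵥ x) i
        + 1 / ω * ∑ j, c x j * fderiv ℝ (fun y => c y j) x (Pi.single i 1)
        - τ / (x i - xL i) + τ / (xR i - x i) = 0 := by
  simp only [ContinuousLinearMap.eq_zero_iff_apply_single_one,
    fderiv_penaltyBarrier_apply_single hf hc hS hx]

end

theorem stmt_3_general (n m : ℕ) (xL xR : Fin n → ℝ)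
    (f : (Fin n → ℝ) → ℝ) (hf : Differentiable ℝ f)
    (c : (Fin n → ℝ) → Fin m → ℝ) (hc : ∀ j, Differentiable ℝ (fun x => c x j))
    (S : Matrix (Fin n) (Fin n) ℝ) (hS : S.PosDef)
    (ρ ω ωt τE : ℝ) (hω : 0 < ω)
    (φ : (Fin n → ℝ) → ℝ)
    (hφ : φ = fun x =>
        f x + ρ / 2 * (x ⬝ᵥ S.mulVec x)
          + 1 / (2 * ω) * ∑ j, (c x j) ^ 2
          - τE * ∑ i, (Real.log (x i - xL i) + Real.log (xR i - x i))) :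
    -- forward direction
    (∀ xs : Fin n → ℝ, (∀ i, xL i < xs i ∧ xs i < xR i) →
      fderiv ℝ φ xs = 0 →
        ((∀ i, fderiv ℝ f xs (Pi.single i 1)
            - (∑ j, ((-(1 / ω) * c xs j) + 0) * fderiv ℝ (fun x => c x j) xs (Pi.single i 1))
            + ρ * S.mulVec xs i
            - τE / (xs i - xL i) + τE / (xR i - xs i) = 0) ∧
         (∀ j, c xs j + ω * (-(1 / ω) * c xs j) + (ω + ωt) * (0 : ℝ) = 0) ∧
         (∀ i, (τE / (xs i - xL i)) * (xs i - xL i) - τE = 0) ∧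
         (∀ i, (τE / (xR i - xs i)) * (xR i - xs i) - τE = 0))) ∧
    -- converse direction (λ = 0)
    (∀ (x μL μR : Fin n → ℝ) (lamhat : Fin m → ℝ),
      (∀ i, xL i < x i ∧ x i < xR i) → (∀ i, 0 < μL i) → (∀ i, 0 < μR i) →
      (∀ i, fderiv ℝ f x (Pi.single i 1)
          - (∑ j, (lamhat j + 0) * fderiv ℝ (fun x => c x j) x (Pi.single i 1))
          + ρ * S.mulVec x i - μL i + μR i = 0) →
      (∀ j, c x j + ω * lamhat j + (ω + ωt) * (0 : ℝ) = 0) →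
      (∀ i, μL i * (x i - xL i) - τE = 0) →
      (∀ i, μR i * (xR i - x i) - τE = 0) →
      fderiv ℝ φ x = 0) := by
  obtain rfl : φ = penaltyBarrier f c S ρ ω τE xL xR := hφ
  have hSymm : S.IsSymm := isHermitian_iff_isSymm.mp hS.isHermitian
  have hsum : ∀ x i,
      ∑ j, (-(1 / ω) * c x j + 0) * fderiv ℝ (fun y => c y j) x (Pi.single i 1)
      = -(1 / ω * ∑ j, c x j * fderiv ℝ (fun y => c y j) x (Pi.single i 1)) := by
    intro x i
    simp only [add_zero, neg_mul, mul_assoc, Finset.sum_neg_distrib, ← Finset.mul_sum]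
  refine ⟨fun xs hxs hstat => ?_, fun x μL μR lamhat hx _ _ hstat hfeas hcompL hcompR => ?_⟩
  · have hgrad :=
      (fderiv_penaltyBarrier_eq_zero_iff (hf xs) (fun j => hc j xs) hSymm hxs ..).mp hstat
    refine ⟨fun i => by linarith [hgrad i, hsum xs i], fun j => by field_simp; ring,
      fun i => ?_, fun i => ?_⟩
    · rw [div_mul_cancel₀ _ (sub_pos.2 (hxs i).1).ne', sub_self]
    · rw [div_mul_cancel₀ _ (sub_pos.2 (hxs i).2).ne', sub_self]
  · obtain rfl : lamhat = fun j => -(1 / ω) * c x j :=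
      funext fun j => by field_simp; linarith [hfeas j]
    obtain rfl : μL = fun i => τE / (x i - xL i) :=
      funext fun i => eq_div_of_mul_eq (sub_pos.2 (hx i).1).ne' (by linarith [hcompL i])
    obtain rfl : μR = fun i => τE / (xR i - x i) :=
      funext fun i => eq_div_of_mul_eq (sub_pos.2 (hx i).2).ne' (by linarith [hcompR i])
    refine (fderiv_penaltyBarrier_eq_zero_iff (hf x) (fun j => hc j x) hSymm hx ..).mpr fun i => ?_
    linarith [hstat i, hsum x i]

/-- Stationarity of the penalty-barrier function φ corresponds exactly to roots of
the interior-point root function F (funnel term w ≡ 0) with λ-component zero.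
Forward: if x* ∈ Ω and ∇φ(x*) = 0, then z* = (x*, λ = 0, μL*, μR*) with
λ̂ = -(1/ω)·c(x*), μL* = τE/(x*-x_L), μR* = τE/(x_R-x*) satisfies F(z*,(τE,λ̂)) = 0.
Converse: if F(z,(τE,λ̂)) = 0 with λ = 0 (and x ∈ Ω, μL, μR > 0) then ∇φ(x) = 0. -/
theorem stmt_3 (n m : ℕ) (xL xR : Fin n → ℝ)
    (f : (Fin n → ℝ) → ℝ) (hf : Differentiable ℝ f)
    (c : (Fin n → ℝ) → Fin m → ℝ) (hc : ∀ j, Differentiable ℝ (fun x => c x j))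
    (S : Matrix (Fin n) (Fin n) ℝ) (hS : S.PosDef)
    (ρ ω ωt τE : ℝ) (hρ : 0 < ρ) (hω : 0 < ω) (hωt : 0 < ωt) (hτE : 0 < τE)
    (φ : (Fin n → ℝ) → ℝ)
    (hφ : φ = fun x =>
        f x + ρ / 2 * (x ⬝ᵥ S.mulVec x)
          + 1 / (2 * ω) * ∑ j, (c x j) ^ 2
          - τE * ∑ i, (Real.log (x i - xL i) + Real.log (xR i - x i))) :
    -- forward direction
    (∀ xs : Fin n → ℝ, (∀ i, xL i < xs i ∧ xs i < xR i) →
      fderiv ℝ φ xs = 0 →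
        ((∀ i, fderiv ℝ f xs (Pi.single i 1)
            - (∑ j, ((-(1 / ω) * c xs j) + 0) * fderiv ℝ (fun x => c x j) xs (Pi.single i 1))
            + ρ * S.mulVec xs i
            - τE / (xs i - xL i) + τE / (xR i - xs i) = 0) ∧
         (∀ j, c xs j + ω * (-(1 / ω) * c xs j) + (ω + ωt) * (0 : ℝ) = 0) ∧
         (∀ i, (τE / (xs i - xL i)) * (xs i - xL i) - τE = 0) ∧
         (∀ i, (τE / (xR i - xs i)) * (xR i - xs i) - τE = 0))) ∧
    -- converse direction (λ = 0)
    (∀ (x μL μR : Fin n → ℝ) (lamhat : Fin m → ℝ),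
      (∀ i, xL i < x i ∧ x i < xR i) → (∀ i, 0 < μL i) → (∀ i, 0 < μR i) →
      (∀ i, fderiv ℝ f x (Pi.single i 1)
          - (∑ j, (lamhat j + 0) * fderiv ℝ (fun x => c x j) x (Pi.single i 1))
          + ρ * S.mulVec x i - μL i + μR i = 0) →
      (∀ j, c x j + ω * lamhat j + (ω + ωt) * (0 : ℝ) = 0) →
      (∀ i, μL i * (x i - xL i) - τE = 0) →
      (∀ i, μR i * (xR i - x i) - τE = 0) →
      fderiv ℝ φ x = 0) :=
  stmt_3_general n m xL xR f hf c hc S hS ρ ω ωt τE hω φ hφ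
end

section
/- Let M(z,p) be the primal-dual merit function restricted to the case m = 0 (no equality constraints) and ν ≥ 0: M(x, μ_L, μ_R) = f(x) + (ρ/2)‖x‖_S² - τΣ(log(x-x_L)+log(x_R-x)) - ντΣ(log(μ_L∘(x-x_L)/τ) + 1 - μ_L∘(x-x_L)/τ) - ντΣ(log(μ_R∘(x_R-x)/τ) + 1 - μ_R∘(x_R-x)/τ). Then (x*, μ_L*, μ_R*) is a stationary point of M with x* ∈ Ω, μ_L*, μ_R* > 0 if and only if ∇f(x*) + ρSx* - μ_L* + μ_R* = 0, μ_L*∘(x*-x_L) = τ·1, and μ_R*∘(x_R-x*) = τ·1. -/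
open Matrix

/-!
The `μ_L`- and `μ_R`-components of the gradient of `M` are `-ν (τ / μ_L - (x - x_L))` and
`-ν (τ / μ_R - (x_R - x))`, so they vanish exactly under complementarity `μ_L (x - x_L) = τ`,
`μ_R (x_R - x) = τ`. Complementarity turns the barrier terms `τ / (x - x_L)` and `τ / (x_R - x)` of
the `x`-component into `μ_L` and `μ_R`, so that component collapses to `∇f(x) + ρ S x - μ_L + μ_R`
since `S` is symmetric.
-/

abbrev Triple (ι : Type*) := (ι → ℝ) × (ι → ℝ) × (ι → ℝ)

namespace Triple

variable {ι : Type*} [Fintype ι]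

/-- Derivatives on `Triple ι` are written as `Triple.dot g` for a gradient `g`; linearity in `g`
lets the sum and scalar rules of differentiation act on gradients. -/
noncomputable def dot : Triple ι →ₗ[ℝ] Triple ι →L[ℝ] ℝ :=
  LinearMap.toContinuousLinearMap.toLinearMap ∘ₗ
    LinearMap.mk₂ ℝ (fun g v : Triple ι => g.1 ⬝ᵥ v.1 + g.2.1 ⬝ᵥ v.2.1 + g.2.2 ⬝ᵥ v.2.2)
      (fun _ _ _ => by simp only [Prod.fst_add, Prod.snd_add, add_dotProduct]; ring)
      (fun _ _ _ => by simp only [Prod.smul_fst, Prod.smul_snd, smul_dotProduct, smul_eq_mul]; ring)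
      (fun _ _ _ => by simp only [Prod.fst_add, Prod.snd_add, dotProduct_add]; ring)
      (fun _ _ _ => by simp only [Prod.smul_fst, Prod.smul_snd, dotProduct_smul, smul_eq_mul]; ring)

theorem dot_apply (g v : Triple ι) : dot g v = g.1 ⬝ᵥ v.1 + g.2.1 ⬝ᵥ v.2.1 + g.2.2 ⬝ᵥ v.2.2 :=
  rfl

theorem dot_eq_zero_iff {g : Triple ι} : dot g = 0 ↔ g = 0 := by
  refine ⟨fun h => ?_, fun h => by rw [h, map_zero]⟩
  have h₁ := congrArg (· (g.1, 0, 0)) h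
  have h₂ := congrArg (· (0, g.2.1, 0)) h
  have h₃ := congrArg (· (0, 0, g.2.2)) h
  simp only [dot_apply, dotProduct_zero, add_zero, zero_add, _root_.zero_apply,
    dotProduct_self_eq_zero] at h₁ h₂ h₃
  exact Prod.ext h₁ (Prod.ext h₂ h₃)

variable [DecidableEq ι]

theorem hasFDerivAt_fst_apply (z : Triple ι) (i : ι) :
    HasFDerivAt (fun y : Triple ι => y.1 i) (dot (Pi.single i 1, 0, 0)) z := by
  have h := (hasFDerivAt_apply (𝕜 := ℝ) i z.1).comp z hasFDerivAt_fst
  exact h.congr_fderiv (ContinuousLinearMap.ext fun v => by simp [dot_apply])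

theorem hasFDerivAt_snd_fst_apply (z : Triple ι) (i : ι) :
    HasFDerivAt (fun y : Triple ι => y.2.1 i) (dot (0, Pi.single i 1, 0)) z := by
  have h := (hasFDerivAt_apply (𝕜 := ℝ) i z.2.1).comp z (hasFDerivAt_fst.comp z hasFDerivAt_snd)
  exact h.congr_fderiv (ContinuousLinearMap.ext fun v => by simp [dot_apply])

theorem hasFDerivAt_snd_snd_apply (z : Triple ι) (i : ι) :
    HasFDerivAt (fun y : Triple ι => y.2.2 i) (dot (0, 0, Pi.single i 1)) z := by
  have h := (hasFDerivAt_apply (𝕜 := ℝ) i z.2.2).comp z (hasFDerivAt_snd.comp z hasFDerivAt_snd)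
  exact h.congr_fderiv (ContinuousLinearMap.ext fun v => by simp [dot_apply])

theorem hasFDerivAt_comp_fst {f : (ι → ℝ) → ℝ} {f' : (ι → ℝ) →L[ℝ] ℝ} {z : Triple ι}
    (hf : HasFDerivAt f f' z.1) :
    HasFDerivAt (fun y : Triple ι => f y.1) (dot (fun i => f' (Pi.single i 1), 0, 0)) z :=
  (hf.comp z hasFDerivAt_fst).congr_fderiv <| ContinuousLinearMap.ext fun v => by
    conv_lhs =>
      rw [ContinuousLinearMap.comp_apply, ContinuousLinearMap.coe_fst', pi_eq_sum_univ' v.1]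
    simp [dot_apply, dotProduct, mul_comm]

theorem hasFDerivAt_dotProduct_mulVec_self (S : Matrix ι ι ℝ) (z : Triple ι) :
    HasFDerivAt (fun y : Triple ι => y.1 ⬝ᵥ S *ᵥ y.1) (dot ((S + Sᵀ) *ᵥ z.1, 0, 0)) z := by
  have h := HasFDerivAt.fun_sum (u := Finset.univ) fun i _ =>
    (hasFDerivAt_fst_apply z i).mul
      (HasFDerivAt.fun_sum (u := Finset.univ) fun j _ =>
        (hasFDerivAt_fst_apply z j).const_mul (S i j))
  refine h.congr_fderiv (ContinuousLinearMap.ext fun v => ?_)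
  simp only [_root_.sum_apply, _root_.add_apply, _root_.smul_apply, dot_apply,
    single_one_dotProduct, zero_dotProduct, add_zero, smul_eq_mul, Finset.mul_sum]
  simp only [dotProduct, mulVec, Matrix.add_apply, transpose_apply, add_mul,
    Finset.sum_add_distrib, Finset.sum_mul]
  rw [add_comm, Finset.sum_comm]
  congr 1
  rw [Finset.sum_comm]
  exact Finset.sum_congr rfl fun i _ => Finset.sum_congr rfl fun j _ => by ring

end Triple

theorem HasFDerivAt.log_mul_div_add_one_sub {E : Type*} [NormedAddCommGroup E] [NormedSpace ℝ E]
    {u w : E → ℝ} {u' w' : E →L[ℝ] ℝ} {z : E} {τ : ℝ} (hu : HasFDerivAt u u' z)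
    (hw : HasFDerivAt w w' z) (hu0 : u z ≠ 0) (hw0 : w z ≠ 0) (hτ : τ ≠ 0) :
    HasFDerivAt (fun y => Real.log (u y * w y / τ) + 1 - u y * w y / τ)
      (((u z)⁻¹ - w z / τ) • u' + ((w z)⁻¹ - u z / τ) • w') z := by
  have hq := (hasDerivAt_id (u z * w z)).div_const τ
  have hφ := ((hq.log (by simp [hu0, hw0, hτ])).add_const 1).sub hq
  refine (hφ.comp_hasFDerivAt z (hu.fun_mul hw)).congr_fderiv
    (ContinuousLinearMap.ext fun v => ?_)
  simp only [one_div, id_eq, smul_add, _root_.add_apply, _root_.smul_apply, smul_eq_mul]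
  field_simp
  ring

section Merit

variable {ι : Type*} [Fintype ι]

noncomputable def primalDualMerit (f : (ι → ℝ) → ℝ) (S : Matrix ι ι ℝ) (ρ τ ν : ℝ)
    (xL xR : ι → ℝ) (z : Triple ι) : ℝ :=
  f z.1 + ρ / 2 * (z.1 ⬝ᵥ S.mulVec z.1)
    - τ * ∑ i, (Real.log (z.1 i - xL i) + Real.log (xR i - z.1 i))
    - ν * τ * ∑ i, (Real.log (z.2.1 i * (z.1 i - xL i) / τ)
        + 1 - z.2.1 i * (z.1 i - xL i) / τ)
    - ν * τ * ∑ i, (Real.log (z.2.2 i * (xR i - z.1 i) / τ)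
        + 1 - z.2.2 i * (xR i - z.1 i) / τ)

theorem hasFDerivAt_primalDualMerit [DecidableEq ι] {f : (ι → ℝ) → ℝ} {f' : (ι → ℝ) →L[ℝ] ℝ}
    (S : Matrix ι ι ℝ) (ρ : ℝ) {τ : ℝ} (ν : ℝ) {xL xR x μL μR : ι → ℝ}
    (hf : HasFDerivAt f f' x) (hτ : τ ≠ 0) (hxL : ∀ i, x i - xL i ≠ 0)
    (hxR : ∀ i, xR i - x i ≠ 0) (hμL : ∀ i, μL i ≠ 0) (hμR : ∀ i, μR i ≠ 0) :
    HasFDerivAt (primalDualMerit f S ρ τ ν xL xR)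
      (Triple.dot
        (fun i => f' (Pi.single i 1) + ρ / 2 * ((S + Sᵀ) *ᵥ x) i
            - τ * ((x i - xL i)⁻¹ - (xR i - x i)⁻¹)
            - ν * τ * ((x i - xL i)⁻¹ - μL i / τ) + ν * τ * ((xR i - x i)⁻¹ - μR i / τ),
          fun i => -(ν * τ * ((μL i)⁻¹ - (x i - xL i) / τ)),
          fun i => -(ν * τ * ((μR i)⁻¹ - (xR i - x i) / τ))))
      (x, μL, μR) := by
  set z : Triple ι := (x, μL, μR)
  have hx := Triple.hasFDerivAt_fst_apply z
  have hBarrier := HasFDerivAt.fun_sum (u := Finset.univ) fun i _ =>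
    (((hx i).sub_const (xL i)).log (hxL i)).add (((hx i).const_sub (xR i)).log (hxR i))
  have hComplL := HasFDerivAt.fun_sum (u := Finset.univ) fun i _ =>
    (Triple.hasFDerivAt_snd_fst_apply z i).log_mul_div_add_one_sub ((hx i).sub_const (xL i))
      (hμL i) (hxL i) hτ
  have hComplR := HasFDerivAt.fun_sum (u := Finset.univ) fun i _ =>
    (Triple.hasFDerivAt_snd_snd_apply z i).log_mul_div_add_one_sub ((hx i).const_sub (xR i))
      (hμR i) (hxR i) hτ
  have h := ((((Triple.hasFDerivAt_comp_fst (z := z) hf).add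
    ((Triple.hasFDerivAt_dotProduct_mulVec_self S z).const_mul (ρ / 2))).sub
    (hBarrier.const_mul τ)).sub (hComplL.const_mul (ν * τ))).sub (hComplR.const_mul (ν * τ))
  refine h.congr_fderiv ?_
  simp only [← map_neg, ← map_smul, ← map_add, ← map_sub, ← map_sum]
  congr 1
  ext i <;> simp [z, Prod.fst_sum, Prod.snd_sum, Finset.sum_apply, Pi.single_apply,
    Finset.sum_add_distrib]
  ring

end Merit

theorem stationary_coord_iff_kkt {g d e μ η ν τ : ℝ} (hd : d ≠ 0) (he : e ≠ 0) (hμ : μ ≠ 0)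
    (hη : η ≠ 0) (hν : ν ≠ 0) (hτ : τ ≠ 0) :
    (g - τ * (d⁻¹ - e⁻¹) - ν * τ * (d⁻¹ - μ / τ) + ν * τ * (e⁻¹ - η / τ) = 0 ∧
        -(ν * τ * (μ⁻¹ - d / τ)) = 0 ∧ -(ν * τ * (η⁻¹ - e / τ)) = 0) ↔
      (g - μ + η = 0 ∧ μ * d = τ ∧ η * e = τ) := by
  have complementarity {a b : ℝ} (ha : a ≠ 0) : -(ν * τ * (a⁻¹ - b / τ)) = 0 ↔ a * b = τ := by
    rw [neg_eq_zero, mul_eq_zero, or_iff_right (mul_ne_zero hν hτ), sub_eq_zero]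
    field_simp
    exact eq_comm
  rw [complementarity hμ, complementarity hη]
  refine and_congr_left fun ⟨hμd, hηe⟩ => ?_
  have hd' : d⁻¹ = μ / τ := by rw [← hμd]; field_simp
  have he' : e⁻¹ = η / τ := by rw [← hηe]; field_simp
  rw [hd', he', sub_self, sub_self]
  congr! 1
  field_simp
  ring

theorem stmt_19_general (n : ℕ) (xL xR : Fin n → ℝ)
    (f : (Fin n → ℝ) → ℝ) (hf : ContDiff ℝ 2 f)
    (S : Matrix (Fin n) (Fin n) ℝ) (hS : S.PosDef)
    (ρ τ ν : ℝ) (hτ : 0 < τ) (hν : 0 < ν)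
    (M : (Fin n → ℝ) × (Fin n → ℝ) × (Fin n → ℝ) → ℝ)
    (hM : M = fun z =>
      f z.1 + ρ / 2 * (z.1 ⬝ᵥ S.mulVec z.1)
        - τ * ∑ i, (Real.log (z.1 i - xL i) + Real.log (xR i - z.1 i))
        - ν * τ * ∑ i, (Real.log (z.2.1 i * (z.1 i - xL i) / τ)
            + 1 - z.2.1 i * (z.1 i - xL i) / τ)
        - ν * τ * ∑ i, (Real.log (z.2.2 i * (xR i - z.1 i) / τ)
            + 1 - z.2.2 i * (xR i - z.1 i) / τ))
    (x μL μR : Fin n → ℝ)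
    (hx : ∀ i, xL i < x i ∧ x i < xR i)
    (hμL : ∀ i, 0 < μL i) (hμR : ∀ i, 0 < μR i) :
    fderiv ℝ M (x, μL, μR) = 0 ↔
      ((∀ i, fderiv ℝ f x (Pi.single i 1) + ρ * S.mulVec x i - μL i + μR i = 0) ∧
       (∀ i, μL i * (x i - xL i) = τ) ∧
       (∀ i, μR i * (xR i - x i) = τ)) := by
  have hxL i : x i - xL i ≠ 0 := (sub_pos.2 (hx i).1).ne'
  have hxR i : xR i - x i ≠ 0 := (sub_pos.2 (hx i).2).ne'
  obtain rfl : M = primalDualMerit f S ρ τ ν xL xR := hM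
  have hD := hasFDerivAt_primalDualMerit S ρ ν (hf.differentiable two_ne_zero x).hasFDerivAt
    hτ.ne' hxL hxR (fun i => (hμL i).ne') (fun i => (hμR i).ne')
  have hquad i : ρ / 2 * ((S + Sᵀ) *ᵥ x) i = ρ * (S *ᵥ x) i := by
    rw [(isHermitian_iff_isSymm.1 hS.isHermitian).eq, add_mulVec, Pi.add_apply]
    ring
  rw [hD.fderiv, Triple.dot_eq_zero_iff, Prod.mk_eq_zero, Prod.mk_eq_zero, funext_iff, funext_iff,
    funext_iff]
  simp only [Pi.zero_apply, hquad, ← forall_and]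
  exact forall_congr' fun i => stationary_coord_iff_kkt (hxL i) (hxR i) (hμL i).ne' (hμR i).ne'
    hν.ne' hτ.ne'

/-- Stationary points of the Forsgren–Gill-type primal-dual merit function M
(case m = 0, no equality constraints) with x ∈ Ω, μ_L, μ_R > 0 are exactly the
roots of the barrier-KKT system: ∇f(x) + ρSx - μ_L + μ_R = 0,
μ_L∘(x-x_L) = τ·1, μ_R∘(x_R-x) = τ·1. -/
theorem stmt_19 (n : ℕ) (xL xR : Fin n → ℝ)
    (f : (Fin n → ℝ) → ℝ) (hf : ContDiff ℝ 2 f)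
    (S : Matrix (Fin n) (Fin n) ℝ) (hS : S.PosDef)
    (ρ τ ν : ℝ) (hρ : 0 < ρ) (hτ : 0 < τ) (hν : 0 < ν)
    (M : (Fin n → ℝ) × (Fin n → ℝ) × (Fin n → ℝ) → ℝ)
    (hM : M = fun z =>
      f z.1 + ρ / 2 * (z.1 ⬝ᵥ S.mulVec z.1)
        - τ * ∑ i, (Real.log (z.1 i - xL i) + Real.log (xR i - z.1 i))
        - ν * τ * ∑ i, (Real.log (z.2.1 i * (z.1 i - xL i) / τ)
            + 1 - z.2.1 i * (z.1 i - xL i) / τ)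
        - ν * τ * ∑ i, (Real.log (z.2.2 i * (xR i - z.1 i) / τ)
            + 1 - z.2.2 i * (xR i - z.1 i) / τ))
    (x μL μR : Fin n → ℝ)
    (hx : ∀ i, xL i < x i ∧ x i < xR i)
    (hμL : ∀ i, 0 < μL i) (hμR : ∀ i, 0 < μR i) :
    fderiv ℝ M (x, μL, μR) = 0 ↔
      ((∀ i, fderiv ℝ f x (Pi.single i 1) + ρ * S.mulVec x i - μL i + μR i = 0) ∧
       (∀ i, μL i * (x i - xL i) = τ) ∧
       (∀ i, μR i * (xR i - x i) = τ)) :=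
  stmt_19_general n xL xR f hf S hS ρ τ ν hτ hν M hM x μL μR hx hμL hμR
end
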